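/- Let f be the harmonic potential function on a finite graph with unit edge resistances corresponding to a unit current flow from x to y (f(x) = 0, f(y) = R_eff(x ↔ y), f harmonic elsewhere). Then f is 1-Lipschitz along edges: for every edge {u,w}, |f(u) − f(w)| ≤ 1. -/

import Mathlib

attribute [local instance] Classical.propDecidable

/-- Dirichlet energy of a function on a finite graph with unit resistances. -/
noncomputable def energy {V : Type} [Fintype V] (G : SimpleGraph V) (f : V → ℝ) : ℝ :=
  (1 / 2) * ∑ u, ∑ w, if G.Adj u w then (f u - f w) ^ 2 else 0

/-- Effective conductance between `x` and `y` (Dirichlet variational principle). -/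
noncomputable def effCond {V : Type} [Fintype V] (G : SimpleGraph V) (x y : V) : ℝ :=
  sInf {e : ℝ | ∃ f : V → ℝ, f x = 0 ∧ f y = 1 ∧ e = energy G f}

/-- Effective resistance between `x` and `y`. -/
noncomputable def effRes {V : Type} [Fintype V] (G : SimpleGraph V) (x y : V) : ℝ :=
  (effCond G x y)⁻¹

/-!
Write `L` for the Laplacian of `G`, so that harmonicity says `L *ᵥ f` vanishes off `{x, y}` and
hence `energy G f = f y * (L *ᵥ f) y`. If `f y = 0` the energy vanishes and `f` is constant along
edges. Otherwise `(f y)⁻¹ • f` is harmonic with boundary values `0` and `1`, so by the Dirichlet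
principle its energy is `effCond G x y = (f y)⁻¹`; this forces `(L *ᵥ f) y = 1`, and since
`L *ᵥ f` sums to zero, `L *ᵥ f = δ_y - δ_x` is a unit current. For an edge `a b` with
`f b < f a`, the net current into the level set `{f ≤ f b}` is then at most `1`, while every edge
entering it carries a nonnegative current and the edge `a b` alone carries `f a - f b`.
-/

open Matrix SimpleGraph Finset

theorem Matrix.PosSemidef.dotProduct_mulVec_self_le {n : Type*} [Fintype n] {A : Matrix n n ℝ}
    (hA : A.PosSemidef) {f g : n → ℝ} (h : (g - f) ⬝ᵥ (A *ᵥ f) = 0) :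
    f ⬝ᵥ (A *ᵥ f) ≤ g ⬝ᵥ (A *ᵥ g) := by
  set d := g - f
  have hsymm : f ⬝ᵥ (A *ᵥ d) = d ⬝ᵥ (A *ᵥ f) := by
    have hT : Aᵀ = A := by rw [← conjTranspose_eq_transpose_of_trivial, hA.1.eq]
    rw [dotProduct_mulVec, ← mulVec_transpose, hT, dotProduct_comm]
  have hd : 0 ≤ d ⬝ᵥ (A *ᵥ d) := by simpa using hA.dotProduct_mulVec_nonneg d
  have hg : g = f + d := by simp [d]
  rw [hg, mulVec_add, dotProduct_add, add_dotProduct, add_dotProduct, hsymm, h]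
  linarith

namespace SimpleGraph

variable {V : Type} (G : SimpleGraph V)

theorem sum_sum_ite_adj_sub_eq_zero (f : V → ℝ) (S : Finset V) :
    ∑ u ∈ S, ∑ w ∈ S, (if G.Adj u w then f u - f w else 0) = 0 := by
  have hanti : ∑ u ∈ S, ∑ w ∈ S, (if G.Adj u w then f u - f w else 0) =
      -∑ u ∈ S, ∑ w ∈ S, (if G.Adj u w then f u - f w else 0) := by
    conv_lhs => rw [sum_comm]
    rw [← sum_neg_distrib]
    refine sum_congr rfl fun u _ => ?_
    rw [← sum_neg_distrib]
    refine sum_congr rfl fun w _ => ?_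
    rw [G.adj_comm]
    split_ifs <;> ring
  linarith

variable [Fintype V]

theorem energy_eq_dotProduct_lapMatrix_mulVec (f : V → ℝ) :
    energy G f = f ⬝ᵥ (G.lapMatrix ℝ *ᵥ f) := by
  rw [← toLinearMap₂'_apply', lapMatrix_toLinearMap₂', energy]
  ring

theorem energy_smul (c : ℝ) (f : V → ℝ) : energy G (c • f) = c ^ 2 * energy G f := by
  simp only [energy_eq_dotProduct_lapMatrix_mulVec, mulVec_smul, smul_dotProduct, dotProduct_smul,
    smul_eq_mul]
  ring

theorem energy_eq_zero_iff {f : V → ℝ} : energy G f = 0 ↔ ∀ u w, G.Adj u w → f u = f w := by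
  rw [energy_eq_dotProduct_lapMatrix_mulVec, ← toLinearMap₂'_apply',
    lapMatrix_toLinearMap₂'_apply'_eq_zero_iff_forall_adj]

theorem lapMatrix_mulVec_apply_eq_card_mul_sub_sum (f : V → ℝ) (u : V) :
    (G.lapMatrix ℝ *ᵥ f) u = Nat.card (G.neighborSet u) * f u -
      ∑ w ∈ (Set.toFinite (G.neighborSet u)).toFinset, f w := by
  rw [lapMatrix_mulVec_apply, Nat.card_eq_fintype_card, card_neighborSet_eq_degree,
    Set.toFinite_toFinset, neighborFinset]

theorem lapMatrix_mulVec_apply_eq_sum (f : V → ℝ) (u : V) :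
    (G.lapMatrix ℝ *ᵥ f) u = ∑ w, if G.Adj u w then f u - f w else 0 := by
  rw [lapMatrix_mulVec_apply, ← sum_filter, sum_sub_distrib, sum_const, nsmul_eq_mul,
    ← neighborFinset_eq_filter, card_neighborFinset_eq_degree]

theorem sum_lapMatrix_mulVec_eq_sum_compl (f : V → ℝ) (S : Finset V) :
    ∑ u ∈ S, (G.lapMatrix ℝ *ᵥ f) u =
      ∑ u ∈ S, ∑ w ∈ Sᶜ, (if G.Adj u w then f u - f w else 0) := by
  simp only [lapMatrix_mulVec_apply_eq_sum, ← sum_add_sum_compl S, sum_add_distrib,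
    sum_sum_ite_adj_sub_eq_zero, zero_add]

theorem sum_lapMatrix_mulVec_eq_zero (f : V → ℝ) : ∑ u, (G.lapMatrix ℝ *ᵥ f) u = 0 := by
  simp [sum_lapMatrix_mulVec_eq_sum_compl]

theorem sub_le_neg_sum_lapMatrix_mulVec {f : V → ℝ} {a b : V} (hab : G.Adj a b) :
    f a - f b ≤ -∑ u ∈ univ.filter (f · ≤ f b), (G.lapMatrix ℝ *ᵥ f) u := by
  set S := univ.filter (f · ≤ f b)
  have hcut : ∀ u ∈ S, ∀ w ∈ Sᶜ, 0 ≤ -(if G.Adj u w then f u - f w else 0) := by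
    intro u hu w hw
    simp only [S, mem_compl, mem_filter, mem_univ, true_and, not_le] at hu hw
    split_ifs <;> linarith
  rw [sum_lapMatrix_mulVec_eq_sum_compl, ← sum_neg_distrib]
  simp_rw [← sum_neg_distrib]
  by_cases ha : f a ≤ f b
  · exact (sub_nonpos.mpr ha).trans (sum_nonneg fun u hu => sum_nonneg (hcut u hu))
  have hb : b ∈ S := by simp [S]
  have haS : a ∈ Sᶜ := by simpa [S] using ha
  calc f a - f b = -(if G.Adj b a then f b - f a else 0) := by rw [if_pos hab.symm]; ring
    _ ≤ ∑ w ∈ Sᶜ, -(if G.Adj b w then f b - f w else 0) :=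
      single_le_sum (hcut b hb) haS
    _ ≤ ∑ u ∈ S, ∑ w ∈ Sᶜ, -(if G.Adj u w then f u - f w else 0) :=
      single_le_sum (f := fun u => ∑ w ∈ Sᶜ, -(if G.Adj u w then f u - f w else 0))
        (fun u hu => sum_nonneg (hcut u hu)) hb

theorem energy_le_of_lapMatrix_mulVec_eq_zero {B : Set V} {f g : V → ℝ}
    (hf : ∀ u ∉ B, (G.lapMatrix ℝ *ᵥ f) u = 0) (hg : ∀ u ∈ B, g u = f u) :
    energy G f ≤ energy G g := by
  rw [energy_eq_dotProduct_lapMatrix_mulVec, energy_eq_dotProduct_lapMatrix_mulVec]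
  refine (G.posSemidef_lapMatrix ℝ).dotProduct_mulVec_self_le (sum_eq_zero fun u _ => ?_)
  by_cases hu : u ∈ B
  · simp [hg u hu]
  · simp [hf u hu]

theorem effCond_eq_energy {x y : V} {g : V → ℝ} (hgx : g x = 0) (hgy : g y = 1)
    (hg : ∀ u, u ≠ x → u ≠ y → (G.lapMatrix ℝ *ᵥ g) u = 0) : effCond G x y = energy G g := by
  refine IsLeast.csInf_eq ⟨⟨g, hgx, hgy, rfl⟩, ?_⟩
  rintro _ ⟨h, hhx, hhy, rfl⟩
  refine G.energy_le_of_lapMatrix_mulVec_eq_zero (B := {x, y}) (fun u hu => ?_) ?_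
  · simp only [Set.mem_insert_iff, Set.mem_singleton_iff, not_or] at hu
    exact hg u hu.1 hu.2
  · rintro u (rfl | rfl) <;> simp_all

section Potential

variable {G} {x y : V} {f : V → ℝ}

theorem energy_eq_mul_lapMatrix_mulVec_apply (hfx : f x = 0)
    (hf : ∀ u, u ≠ x → u ≠ y → (G.lapMatrix ℝ *ᵥ f) u = 0) :
    energy G f = f y * (G.lapMatrix ℝ *ᵥ f) y := by
  rw [energy_eq_dotProduct_lapMatrix_mulVec, dotProduct]
  refine sum_eq_single y (fun u _ huy => ?_) (by simp)
  by_cases hux : u = x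
  · rw [hux, hfx, zero_mul]
  · rw [hf u hux huy, mul_zero]

theorem lapMatrix_mulVec_apply_eq_one (hfx : f x = 0) (hfy : f y = effRes G x y)
    (hy : f y ≠ 0) (hf : ∀ u, u ≠ x → u ≠ y → (G.lapMatrix ℝ *ᵥ f) u = 0) :
    (G.lapMatrix ℝ *ᵥ f) y = 1 := by
  have hC : effCond G x y = (f y)⁻¹ := by rw [hfy, effRes, inv_inv]
  have hmin : effCond G x y = energy G ((f y)⁻¹ • f) :=
    G.effCond_eq_energy (by simp [hfx]) (by simp [hy])
      (fun u hux huy => by simp [mulVec_smul, hf u hux huy])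
  rw [hC, energy_smul, energy_eq_mul_lapMatrix_mulVec_apply hfx hf] at hmin
  field_simp at hmin
  linarith

theorem lapMatrix_mulVec_eq_single_sub_single (hxy : x ≠ y)
    (hf : ∀ u, u ≠ x → u ≠ y → (G.lapMatrix ℝ *ᵥ f) u = 0) (hfy : (G.lapMatrix ℝ *ᵥ f) y = 1) :
    G.lapMatrix ℝ *ᵥ f = Pi.single y 1 - Pi.single x 1 := by
  have hfx : (G.lapMatrix ℝ *ᵥ f) x = -1 := by
    have hsum := G.sum_lapMatrix_mulVec_eq_zero f
    rw [sum_eq_add x y hxy (fun u _ hu => hf u hu.1 hu.2) (by simp) (by simp), hfy] at hsum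
    linarith
  ext u
  by_cases hux : u = x
  · subst hux; simp [hfx, hxy]
  by_cases huy : u = y
  · subst huy; simp [hfy, Ne.symm hxy]
  simp [hf u hux huy, hux, huy]

end Potential

end SimpleGraph

theorem potential_lipschitz_general {V : Type} [Fintype V] (G : SimpleGraph V)
    (x y : V) (f : V → ℝ)
    (hfx : f x = 0) (hfy : f y = effRes G x y)
    (hharm : ∀ u : V, u ≠ x → u ≠ y →
      (Nat.card (G.neighborSet u) : ℝ) * f u =
        ∑ w ∈ (Set.toFinite (G.neighborSet u)).toFinset, f w) :
    ∀ u w : V, G.Adj u w → |f u - f w| ≤ 1 := by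
  have hf : ∀ u, u ≠ x → u ≠ y → (G.lapMatrix ℝ *ᵥ f) u = 0 := fun u hux huy => by
    rw [lapMatrix_mulVec_apply_eq_card_mul_sub_sum, hharm u hux huy, sub_self]
  rcases eq_or_ne (f y) 0 with hy | hy
  · have hE : energy G f = 0 := by rw [energy_eq_mul_lapMatrix_mulVec_apply hfx hf, hy, zero_mul]
    intro u w huw
    simp [(energy_eq_zero_iff G).mp hE u w huw]
  have hxy : x ≠ y := by rintro rfl; exact hy hfx
  have hcurrent := lapMatrix_mulVec_eq_single_sub_single hxy hf
    (lapMatrix_mulVec_apply_eq_one hfx hfy hy hf)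
  have hcut : ∀ S : Finset V, -∑ u ∈ S, (G.lapMatrix ℝ *ᵥ f) u ≤ 1 := fun S => by
    simp only [hcurrent, Pi.sub_apply, sum_sub_distrib, sum_pi_single']
    split_ifs <;> norm_num
  intro u w huw
  rw [abs_sub_le_iff]
  exact ⟨(G.sub_le_neg_sum_lapMatrix_mulVec huw).trans (hcut _),
    (G.sub_le_neg_sum_lapMatrix_mulVec huw.symm).trans (hcut _)⟩

/-- The harmonic potential of the unit current flow from `x` to `y` is 1-Lipschitz
along edges. -/
theorem potential_lipschitz {V : Type} [Fintype V] (G : SimpleGraph V)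
    (hconn : G.Connected) (x y : V) (hxy : x ≠ y) (f : V → ℝ)
    (hfx : f x = 0) (hfy : f y = effRes G x y)
    (hharm : ∀ u : V, u ≠ x → u ≠ y →
      (Nat.card (G.neighborSet u) : ℝ) * f u =
        ∑ w ∈ (Set.toFinite (G.neighborSet u)).toFinset, f w) :
    ∀ u w : V, G.Adj u w → |f u - f w| ≤ 1 :=
  potential_lipschitz_general G x y f hfx hfy hharm
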